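/- Let $\gamma \geq 1$, $\rho > 0$, $\delta > 0$, and set $F(v) := \rho \operatorname{sgn}(v) |v|^{\gamma}$. Then for all $x, y \in \mathbb{R}$ with $|x - y| \geq \delta$, one has $\big( F(x) - F(y) \big)(x - y) \geq \rho \, 2^{1-\gamma} \delta^{\gamma - 1} (x - y)^2$. -/
import Mathlib

private lemma real_superadd {p u v : ℝ} (hp : 1 ≤ p) (hu : 0 ≤ u) (hv : 0 ≤ v) :
    u ^ p + v ^ p ≤ (u + v) ^ p := by
  have h := NNReal.add_rpow_le_rpow_add (⟨u, hu⟩ : NNReal) (⟨v, hv⟩ : NNReal) hp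
  exact_mod_cast h

private lemma real_mean {p u v : ℝ} (hp : 1 ≤ p) (hu : 0 ≤ u) (hv : 0 ≤ v) :
    (u + v) ^ p ≤ 2 ^ (p - 1) * (u ^ p + v ^ p) := by
  have h := NNReal.rpow_add_le_mul_rpow_add_rpow (⟨u, hu⟩ : NNReal) (⟨v, hv⟩ : NNReal) hp
  exact_mod_cast h

private lemma sign_abs_rpow {γ : ℝ} (hγ : 1 ≤ γ) {v : ℝ} (hv : 0 ≤ v) :
    Real.sign v * |v| ^ γ = v ^ γ := by
  rcases eq_or_lt_of_le hv with h | h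
  · have hγ0 : γ ≠ 0 := by positivity
    rw [← h]; simp [Real.zero_rpow hγ0]
  · rw [Real.sign_of_pos h, abs_of_pos h, one_mul]

private lemma key_nonneg {γ : ℝ} (hγ : 1 ≤ γ) {a b : ℝ} (hb : 0 ≤ b) (hab : b ≤ a) :
    (2 : ℝ) ^ (1 - γ) * (a - b) ^ γ ≤ Real.sign a * |a| ^ γ - Real.sign b * |b| ^ γ := by
  rw [sign_abs_rpow hγ (hb.trans hab), sign_abs_rpow hγ hb]
  have h2 : (2 : ℝ) ^ (1 - γ) ≤ 1 :=
    Real.rpow_le_one_of_one_le_of_nonpos one_le_two (by linarith)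
  have hsup : (a - b) ^ γ + b ^ γ ≤ a ^ γ := by
    have := real_superadd hγ (sub_nonneg.2 hab) hb
    simpa [sub_add_cancel] using this
  have hpos : (0 : ℝ) ≤ (a - b) ^ γ := Real.rpow_nonneg (by linarith) γ
  nlinarith [mul_le_mul_of_nonneg_right h2 hpos]

private lemma key {γ : ℝ} (hγ : 1 ≤ γ) {a b : ℝ} (hab : b ≤ a) :
    (2 : ℝ) ^ (1 - γ) * (a - b) ^ γ ≤ Real.sign a * |a| ^ γ - Real.sign b * |b| ^ γ := by
  rcases le_or_gt 0 b with hb | hb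
  · exact key_nonneg hγ hb hab
  rcases le_or_gt a 0 with ha | ha
  · have h := key_nonneg hγ (by linarith : (0:ℝ) ≤ -a) (by linarith : -a ≤ -b)
    have e : -b - -a = a - b := by ring
    rw [e, Real.sign_neg, Real.sign_neg, abs_neg, abs_neg] at h
    linarith
  · -- b < 0 < a
    rw [Real.sign_of_pos ha, abs_of_pos ha, one_mul, Real.sign_of_neg hb, abs_of_neg hb]
    have hm := real_mean hγ ha.le (by linarith : (0:ℝ) ≤ -b)
    have e : a + -b = a - b := by ring
    rw [e] at hm
    have h2 : (0:ℝ) < (2 : ℝ) ^ (1 - γ) := Real.rpow_pos_of_pos two_pos _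
    have hmul := mul_le_mul_of_nonneg_left hm h2.le
    have hc : (2 : ℝ) ^ (1 - γ) * (2 : ℝ) ^ (γ - 1) = 1 := by
      rw [← Real.rpow_add two_pos]; norm_num
    calc (2 : ℝ) ^ (1 - γ) * (a - b) ^ γ
        ≤ (2 : ℝ) ^ (1 - γ) * ((2:ℝ) ^ (γ - 1) * (a ^ γ + (-b) ^ γ)) := hmul
      _ = ((2 : ℝ) ^ (1 - γ) * (2:ℝ) ^ (γ - 1)) * (a ^ γ + (-b) ^ γ) := by ring
      _ = a ^ γ + (-b) ^ γ := by rw [hc, one_mul]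
      _ = a ^ γ - -1 * (-b) ^ γ := by ring

private lemma drift_aux
    (γ ρ δ : ℝ) (hγ : 1 ≤ γ) (hρ : 0 < ρ) (hδ : 0 < δ)
    (F : ℝ → ℝ) (hF : ∀ v : ℝ, F v = ρ * Real.sign v * |v| ^ γ)
    (x y : ℝ) (hxy : y < x) (hd : δ ≤ x - y) :
    ρ * (2 : ℝ) ^ (1 - γ) * δ ^ (γ - 1) * (x - y) ^ 2 ≤ (F x - F y) * (x - y) := by
  set d := x - y with hdd
  have hd0 : 0 < d := by linarith
  have hkey := key hγ hxy.le
  rw [← hdd] at hkey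
  have hFx : F x - F y = ρ * (Real.sign x * |x| ^ γ - Real.sign y * |y| ^ γ) := by
    rw [hF, hF]; ring
  -- d ^ γ * d = d ^ (γ - 1) * d ^ 2
  have hsplit : d ^ γ * d = d ^ (γ - 1) * d ^ 2 := by
    rw [show (γ : ℝ) = (γ - 1) + 1 by ring, Real.rpow_add hd0, Real.rpow_one]
    ring
  have hδle : δ ^ (γ - 1) ≤ d ^ (γ - 1) :=
    Real.rpow_le_rpow hδ.le hd (by linarith)
  have h2 : (0:ℝ) < (2 : ℝ) ^ (1 - γ) := Real.rpow_pos_of_pos two_pos _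
  have hstep1 : ρ * ((2 : ℝ) ^ (1 - γ) * d ^ γ) * d ≤ (F x - F y) * d := by
    rw [hFx]
    have := mul_le_mul_of_nonneg_left hkey hρ.le
    nlinarith
  have hstep2 : ρ * (2 : ℝ) ^ (1 - γ) * δ ^ (γ - 1) * d ^ 2 ≤
      ρ * ((2 : ℝ) ^ (1 - γ) * d ^ γ) * d := by
    have : ρ * ((2 : ℝ) ^ (1 - γ) * d ^ γ) * d
        = ρ * (2 : ℝ) ^ (1 - γ) * d ^ (γ - 1) * d ^ 2 := by
      rw [show ρ * ((2 : ℝ) ^ (1 - γ) * d ^ γ) * d = ρ * (2 : ℝ) ^ (1 - γ) * (d ^ γ * d) by ring,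
        hsplit]; ring
    rw [this]
    gcongr
  linarith

/-- Coercivity of the drift `F(v) = ρ sgn(v)|v|^γ`: for `|x - y| ≥ δ`,
`(F(x) - F(y))(x - y) ≥ ρ 2^(1-γ) δ^(γ-1) (x - y)^2`. -/
theorem drift_coercivity
    (γ ρ δ : ℝ) (hγ : 1 ≤ γ) (hρ : 0 < ρ) (hδ : 0 < δ)
    (F : ℝ → ℝ) (hF : ∀ v : ℝ, F v = ρ * Real.sign v * |v| ^ γ) :
    ∀ x y : ℝ, δ ≤ |x - y| →
      ρ * (2 : ℝ) ^ (1 - γ) * δ ^ (γ - 1) * (x - y) ^ 2 ≤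
        (F x - F y) * (x - y) := by
  intro x y h
  rcases lt_trichotomy y x with hlt | heq | hgt
  · exact drift_aux γ ρ δ hγ hρ hδ F hF x y hlt
      (by rwa [abs_of_pos (by linarith : (0:ℝ) < x - y)] at h)
  · exfalso; rw [heq] at h; simp at h; linarith
  · have := drift_aux γ ρ δ hγ hρ hδ F hF y x hgt
      (by rwa [abs_of_neg (by linarith : x - y < 0), neg_sub] at h)
    nlinarith [this]
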